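/- arXiv:1908.07366 — 10 statements merged into one kernel-verified Lean document; each statement's English description precedes it below -/
import Mathlib

section
/- Let n ≥ 2 be an integer and define Q(p) = (1 - n·p)·p/(1 - p) for p ∈ (0, 1/n). Then p̂ = 1 - √(n·(n-1))/n lies in the open interval (0, 1/n), and for every p ∈ (0, 1/n) one has Q(p) ≤ Q(p̂). (This is the optimal move probability for the Patroller when the attack duration is m = 2.) -/
/-!
Substituting `q = 1 - p` rewrites the interception probability as
`Q = (2n - 1) - (n q + (n - 1) / q)`. By AM-GM the bracket is at least `2 √(n (n - 1))`,
with equality exactly when `n q = (n - 1) / q`, i.e. at `q = √(n (n - 1)) / n`, which is `p̂`.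
Since `(n - 1)² < n (n - 1) < n²`, this `p̂` lies in `(0, 1/n)`.
-/

open Real Set

namespace UniformPatroller

noncomputable def interception (c p : ℝ) : ℝ := (1 - c * p) * p / (1 - p)

lemma interception_eq (c : ℝ) {p : ℝ} (hp : p ≠ 1) :
    interception c p = 2 * c - 1 - (c * (1 - p) + (c - 1) / (1 - p)) := by
  have hq : 1 - p ≠ 0 := sub_ne_zero.mpr hp.symm
  unfold interception
  field_simp
  ring

lemma two_mul_sqrt_mul_le_mul_add_div {a b q : ℝ} (ha : 0 ≤ a) (hb : 0 ≤ b) (hq : 0 < q) :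
    2 * √(a * b) ≤ a * q + b / q := by
  have hx : 0 ≤ a * q := mul_nonneg ha hq.le
  have hy : 0 ≤ b / q := div_nonneg hb hq.le
  have hab : a * b = (a * q) * (b / q) := by field_simp
  calc 2 * √(a * b) = 2 * √(a * q) * √(b / q) := by rw [hab, sqrt_mul hx]; ring
    _ ≤ √(a * q) ^ 2 + √(b / q) ^ 2 := two_mul_le_add_sq _ _
    _ = a * q + b / q := by rw [sq_sqrt hx, sq_sqrt hy]

lemma interception_le {c p : ℝ} (hc : 1 ≤ c) (hp : p < 1) :
    interception c p ≤ 2 * c - 1 - 2 * √(c * (c - 1)) := by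
  rw [interception_eq c hp.ne]
  have := two_mul_sqrt_mul_le_mul_add_div (by linarith : (0 : ℝ) ≤ c) (sub_nonneg.mpr hc)
    (sub_pos.mpr hp)
  linarith

lemma sub_one_lt_sqrt_mul_sub_one {c : ℝ} (hc : 1 < c) : c - 1 < √(c * (c - 1)) :=
  lt_sqrt_of_sq_lt (by nlinarith)

lemma sqrt_mul_sub_one_lt {c : ℝ} (hc : 1 < c) : √(c * (c - 1)) < c :=
  (sqrt_lt' (by linarith)).mpr (by nlinarith)

lemma one_sub_sqrt_mul_sub_one_div_mem_Ioo {c : ℝ} (hc : 1 < c) :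
    1 - √(c * (c - 1)) / c ∈ Ioo 0 (1 / c) := by
  have hc0 : 0 < c := by linarith
  have hlo := sub_one_lt_sqrt_mul_sub_one hc
  have hhi := sqrt_mul_sub_one_lt hc
  constructor
  · rw [sub_pos, div_lt_one hc0]
    exact hhi
  · rw [sub_lt_iff_lt_add, ← sub_lt_iff_lt_add', one_sub_div hc0.ne', div_lt_div_iff_of_pos_right hc0]
    linarith

lemma interception_one_sub_sqrt_mul_sub_one_div {c : ℝ} (hc : 1 < c) :
    interception c (1 - √(c * (c - 1)) / c) = 2 * c - 1 - 2 * √(c * (c - 1)) := by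
  set s := √(c * (c - 1))
  have hs : 0 < s := sqrt_pos.mpr (by nlinarith)
  have hs_sq : s ^ 2 = c * (c - 1) := sq_sqrt (by nlinarith)
  have hc0 : c ≠ 0 := by positivity
  rw [interception_eq c (by simpa using (div_pos hs (by linarith)).ne'), sub_sub_cancel]
  -- both AM-GM terms `c q` and `(c - 1) / q` equal `s` at `q = s / c`
  have hterm : (c - 1) / (s / c) = s := by
    field_simp
    linarith
  rw [mul_div_cancel₀ s hc0, hterm]
  ring

end UniformPatroller

/-- Optimality of p̂ = 1 - √(n(n-1))/n for the interception probability
Q(p) = (1 - n·p)·p/(1 - p) on (0, 1/n), for m = 2. -/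
theorem stmt_0 (n : ℕ) (hn : 2 ≤ n)
    (Q : ℝ → ℝ) (hQ : ∀ p : ℝ, Q p = (1 - (n : ℝ) * p) * p / (1 - p))
    (phat : ℝ) (hphat : phat = 1 - Real.sqrt ((n : ℝ) * ((n : ℝ) - 1)) / (n : ℝ)) :
    phat ∈ Set.Ioo (0 : ℝ) (1 / (n : ℝ)) ∧
      ∀ p ∈ Set.Ioo (0 : ℝ) (1 / (n : ℝ)), Q p ≤ Q phat := by
  have hn1 : (1 : ℝ) < n := by exact_mod_cast hn
  have hQ' : Q = UniformPatroller.interception n := funext hQ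
  subst hQ' hphat
  refine ⟨UniformPatroller.one_sub_sqrt_mul_sub_one_div_mem_Ioo hn1, fun p hp => ?_⟩
  have hp1 : p < 1 := hp.2.trans_le ((div_le_one (by linarith)).mpr hn1.le)
  rw [UniformPatroller.interception_one_sub_sqrt_mul_sub_one_div hn1]
  exact UniformPatroller.interception_le hn1.le hp1
end

section
/- Let n ≥ 2 be an integer, p ∈ (0, 1/n), and define f(c) = (1 - n·p·c)/(1 - p·c). Let the sequence c(d) be defined by c(1) = 1 and c(d+1) = f(c(d)) for d ≥ 1. Then c(2) = (1 - n·p)/(1 - p) < 1, and for every d ≥ 3 one has c(2) < c(d) < 1. -/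
/-- The sequence c(d) of conditional center probabilities satisfies
c(2) = (1 - n·p)/(1 - p) < 1 and c(2) < c(d) < 1 for all d ≥ 3. -/
theorem stmt_4 (n : ℕ) (hn : 2 ≤ n) (p : ℝ) (hp : p ∈ Set.Ioo (0 : ℝ) (1 / (n : ℝ)))
    (f : ℝ → ℝ) (hf : ∀ c : ℝ, f c = (1 - (n : ℝ) * p * c) / (1 - p * c))
    (c : ℕ → ℝ) (hc1 : c 1 = 1) (hcrec : ∀ d : ℕ, 1 ≤ d → c (d + 1) = f (c d)) :
    (c 2 = (1 - (n : ℝ) * p) / (1 - p) ∧ c 2 < 1) ∧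
      ∀ d : ℕ, 3 ≤ d → c 2 < c d ∧ c d < 1 := by
  obtain ⟨hp0, hp1⟩ := hp
  have hn' : (2 : ℝ) ≤ (n : ℝ) := by exact_mod_cast hn
  have hn0 : (0 : ℝ) < (n : ℝ) := by linarith
  have hnp : (n : ℝ) * p < 1 := by
    rw [lt_div_iff₀ hn0] at hp1; nlinarith
  have hplt1 : p < 1 := by nlinarith
  have h1p : (0 : ℝ) < 1 - p := by linarith
  have hc2 : c 2 = (1 - (n : ℝ) * p) / (1 - p) := by
    have := hcrec 1 le_rfl
    rw [hc1] at this
    rw [this, hf]; ring_nf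
  have hc2lt1 : c 2 < 1 := by
    rw [hc2, div_lt_one h1p]; nlinarith
  have hc2pos : 0 < c 2 := by
    rw [hc2]; exact div_pos (by linarith) h1p
  have key : ∀ x : ℝ, 0 < x → x < 1 → c 2 < f x ∧ f x < 1 := by
    intro x hx0 hx1
    have hpx : 0 < 1 - p * x := by nlinarith
    rw [hf, hc2]
    constructor
    · rw [div_lt_div_iff₀ h1p hpx]
      nlinarith [mul_pos hp0 hx0, mul_pos hp0 (sub_pos.mpr hx1),
        mul_pos (mul_pos hp0 (sub_pos.mpr hx1)) (sub_pos.mpr hplt1)]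
    · rw [div_lt_one hpx]
      nlinarith [mul_pos hp0 hx0]
  have main : ∀ d : ℕ, 3 ≤ d → c 2 < c d ∧ c d < 1 := by
    intro d hd
    induction d, hd using Nat.le_induction with
    | base =>
      have h3 : c 3 = f (c 2) := hcrec 2 (by norm_num)
      rw [h3]; exact key _ hc2pos hc2lt1
    | succ d hd ih =>
      have h : c (d + 1) = f (c d) := hcrec d (by omega)
      rw [h]
      exact key _ (lt_trans hc2pos ih.1) ih.2
  exact ⟨⟨hc2, hc2lt1⟩, main⟩
end

section
/- Let n ≥ 2 be an integer, let p ∈ (0, 1/n), and set r = 1 - n·p. Then the function s ↦ (p/(1 - p))·((p + r - 1)·s² + (2 - r - p·r - r² - 2·p)·s + (2·r - p·r + r³)) is monotone nondecreasing on [0, 1]; in particular it is maximized over [0, 1] at s = 1. -/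
/-- For m = 4, against delay d = 2, the interception probability is nondecreasing
in the reflection probability s on [0,1], hence maximized at s = 1. -/
theorem stmt_6 (n : ℕ) (hn : 2 ≤ n) (p : ℝ) (hp : p ∈ Set.Ioo (0 : ℝ) (1 / (n : ℝ)))
    (r : ℝ) (hr : r = 1 - (n : ℝ) * p)
    (Q : ℝ → ℝ)
    (hQ : ∀ s : ℝ, Q s = (p / (1 - p)) *
      ((p + r - 1) * s ^ 2 + (2 - r - p * r - r ^ 2 - 2 * p) * s
        + (2 * r - p * r + r ^ 3))) :
    MonotoneOn Q (Set.Icc 0 1) ∧ ∀ s ∈ Set.Icc (0 : ℝ) 1, Q s ≤ Q 1 := by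
  obtain ⟨hp0, hp1⟩ := hp
  have hn2 : (2 : ℝ) ≤ (n : ℝ) := by exact_mod_cast hn
  have hnpos : (0 : ℝ) < (n : ℝ) := by linarith
  have hpn : (n : ℝ) * p < 1 := by
    have := (lt_div_iff₀ hnpos).mp (by linarith : p < 1 / (n:ℝ)); linarith [mul_comm (n:ℝ) p]
  have hrpos : 0 < r := by rw [hr]; linarith
  have hphalf : p < 1 / 2 := by
    have h2 : 1 / (n : ℝ) ≤ 1 / 2 := by
      apply one_div_le_one_div_of_le <;> linarith
    linarith
  have h1p : 0 < 1 - p := by linarith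
  have hc : 0 < p / (1 - p) := div_pos hp0 h1p
  have mono : MonotoneOn Q (Set.Icc 0 1) := by
    intro x hx y hy hxy
    obtain ⟨hx0, hx1⟩ := hx
    obtain ⟨hy0, hy1⟩ := hy
    rw [hQ, hQ]
    have key : 0 ≤ (p + r - 1) * (x + y) + (2 - r - p * r - r ^ 2 - 2 * p) := by
      have hA : p + r - 1 ≤ 0 := by rw [hr]; nlinarith
      have h2AB : 0 ≤ 2 * (p + r - 1) + (2 - r - p * r - r ^ 2 - 2 * p) := by
        have : 1 - p - r = (n : ℝ) * p - p := by rw [hr]; ring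
        nlinarith
      nlinarith
    have hxy' : 0 ≤ y - x := by linarith
    have expand : (p / (1 - p)) *
        ((p + r - 1) * y ^ 2 + (2 - r - p * r - r ^ 2 - 2 * p) * y + (2 * r - p * r + r ^ 3))
        - (p / (1 - p)) *
        ((p + r - 1) * x ^ 2 + (2 - r - p * r - r ^ 2 - 2 * p) * x + (2 * r - p * r + r ^ 3))
        = (p / (1 - p)) * ((y - x) * ((p + r - 1) * (x + y) + (2 - r - p * r - r ^ 2 - 2 * p))) := by
      ring
    nlinarith [mul_nonneg (le_of_lt hc) (mul_nonneg hxy' key)]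
  refine ⟨mono, fun s hs => mono hs (by constructor <;> norm_num) hs.2⟩
end

section
/- Let poly(r) = -r⁴ + 2·r³ - 3·r² + r + 1 and let r̂ = (1/2)·(1 - (√2 - 1)^{-1/3} + (√2 - 1)^{1/3}). Then poly(r) ≤ poly(r̂) for every r ∈ [0, 1]. -/
/-- poly(r) = -r⁴ + 2r³ - 3r² + r + 1 is maximized on [0,1] at
r̂ = (1/2)(1 - (√2-1)^{-1/3} + (√2-1)^{1/3}). -/
theorem stmt_9 (poly : ℝ → ℝ)
    (hpoly : ∀ r : ℝ, poly r = -r ^ 4 + 2 * r ^ 3 - 3 * r ^ 2 + r + 1)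
    (rhat : ℝ)
    (hrhat : rhat = (1 / 2) * (1 - (Real.sqrt 2 - 1) ^ (-(1 / 3) : ℝ)
      + (Real.sqrt 2 - 1) ^ ((1 / 3) : ℝ))) :
    ∀ r ∈ Set.Icc (0 : ℝ) 1, poly r ≤ poly rhat := by
  have hsq : Real.sqrt 2 ^ 2 = 2 := Real.sq_sqrt (by norm_num)
  have h2 : (0:ℝ) < Real.sqrt 2 - 1 := by
    nlinarith [Real.sqrt_nonneg 2, hsq]
  set t : ℝ := (Real.sqrt 2 - 1) ^ ((1 / 3) : ℝ) with htdef
  have ht : 0 < t := Real.rpow_pos_of_pos h2 _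
  have ht3 : t ^ (3:ℕ) = Real.sqrt 2 - 1 := by
    rw [htdef, ← Real.rpow_natCast ((Real.sqrt 2 - 1) ^ ((1/3):ℝ)) 3,
      ← Real.rpow_mul h2.le]
    norm_num
  have hneg : (Real.sqrt 2 - 1) ^ (-(1 / 3) : ℝ) = t⁻¹ := by
    rw [Real.rpow_neg h2.le, htdef]
  have hinv3 : (t⁻¹) ^ (3:ℕ) = Real.sqrt 2 + 1 := by
    rw [inv_pow, ht3]
    have hm : (Real.sqrt 2 + 1) * (Real.sqrt 2 - 1) = 1 := by nlinarith [hsq]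
    exact (eq_inv_of_mul_eq_one_left hm).symm
  have htt : t * t⁻¹ = 1 := mul_inv_cancel₀ ht.ne'
  have hu : (t - t⁻¹) ^ 3 + 3 * (t - t⁻¹) + 2 = 0 := by
    linear_combination ht3 - hinv3 - (3 * (t - t⁻¹)) * htt
  rw [hneg] at hrhat
  have hcubic : -4 * rhat ^ 3 + 6 * rhat ^ 2 - 6 * rhat + 1 = 0 := by
    rw [hrhat]; linear_combination (-(1:ℝ)/2) * hu
  intro r hr
  have key : poly rhat - poly r
      = (r - rhat) ^ 2 * ((r + rhat - 1) ^ 2 + 2 * rhat ^ 2 - 2 * rhat + 2) := by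
    rw [hpoly, hpoly]
    linear_combination (rhat - r) * hcubic
  nlinarith [sq_nonneg (r - rhat), sq_nonneg (r + rhat - 1),
    sq_nonneg ((r - rhat) * (r + rhat - 1)), sq_nonneg ((r - rhat) * rhat),
    sq_nonneg ((r - rhat) * (rhat - 1)), key]
end

section
/- Let n ≥ 2 be an integer and p ∈ (0, 1/n); set q = (n-1)·p, r = 1 - n·p, u = √((n·p + 1)² - 4·p), w₁ = (1 - n·p - u)/2, w₂ = (1 - n·p + u)/2, a = -(1 - 2·p + n·p - u)/(u·(1 - n·p - u)), and b = (1 - 2·p + n·p + u)/(u·(1 - n·p + u)). If h : ℕ → ℝ satisfies h(1) = 1, h(2) = q + r, and h(m) = r·h(m-1) + q·h(m-2) for all m ≥ 3, then h(m) = a·w₁^m + b·w₂^m for all m ≥ 1. -/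
/-!
The characteristic polynomial of `h(m) = r h(m-1) + q h(m-2)` is `X² - r X - q`, whose discriminant
`r² + 4q` equals `(n p + 1)² - 4p`; so `w₁, w₂ = (r ∓ u)/2` are its roots and every sequence
`a w₁^m + b w₂^m` obeys the recursion. Two solutions that agree at two consecutive indices agree
everywhere, and the given `a, b` are exactly the ones matching `h(1) = 1` and `h(2) = q + r = 1 - p`.
-/

theorem eq_of_two_step_rec {R : Type*} [Semiring R] {r q : R} {f g : ℕ → R}
    (hf : ∀ k, f (k + 2) = r * f (k + 1) + q * f k)
    (hg : ∀ k, g (k + 2) = r * g (k + 1) + q * g k)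
    (h0 : f 0 = g 0) (h1 : f 1 = g 1) : f = g := by
  have agree : ∀ k, f k = g k ∧ f (k + 1) = g (k + 1) := by
    intro k
    induction k with
    | zero => exact ⟨h0, h1⟩
    | succ k ih => exact ⟨ih.2, by rw [hf, hg, ih.1, ih.2]⟩
  exact funext fun k => (agree k).1

theorem add_pow_two_step_rec {R : Type*} [CommSemiring R] {r q w₁ w₂ : R}
    (h₁ : w₁ ^ 2 = r * w₁ + q) (h₂ : w₂ ^ 2 = r * w₂ + q) (a b : R) (k : ℕ) :
    a * w₁ ^ (k + 2) + b * w₂ ^ (k + 2) =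
      r * (a * w₁ ^ (k + 1) + b * w₂ ^ (k + 1)) + q * (a * w₁ ^ k + b * w₂ ^ k) := by
  rw [pow_add w₁, pow_add w₂, h₁, h₂]
  ring

theorem sq_eq_of_two_mul_sub_sq {K : Type*} [Field K] [NeZero (2 : K)] {r q w : K}
    (h : (2 * w - r) ^ 2 = r ^ 2 + 4 * q) : w ^ 2 = r * w + q := by
  have h4 : (2 : K) * 2 * (w ^ 2 - (r * w + q)) = 0 := by linear_combination h
  simpa [sub_eq_zero, two_ne_zero] using h4

theorem closed_form_coeffs_init {K : Type*} [Field K] [NeZero (2 : K)] {r c u w₁ w₂ a b : K}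
    (hu : u ≠ 0) (hru : (r - u) * (r + u) ≠ 0)
    (hw₁ : w₁ = (r - u) / 2) (hw₂ : w₂ = (r + u) / 2)
    (ha : a = -(c - u) / (u * (r - u))) (hb : b = (c + u) / (u * (r + u))) :
    a * w₁ + b * w₂ = 1 ∧ a * w₁ ^ 2 + b * w₂ ^ 2 = (c + r) / 2 := by
  obtain ⟨h₁, h₂⟩ := mul_ne_zero_iff.mp hru
  subst hw₁ hw₂ ha hb
  constructor <;> field_simp <;> ring

/-- Closed form for the solution of the success-probability recursion
h(m) = r·h(m-1) + q·h(m-2), h(1) = 1, h(2) = q + r. -/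
theorem stmt_10 (n : ℕ) (hn : 2 ≤ n) (p : ℝ) (hp : p ∈ Set.Ioo (0 : ℝ) (1 / (n : ℝ)))
    (q r u w₁ w₂ a b : ℝ)
    (hq : q = ((n : ℝ) - 1) * p) (hr : r = 1 - (n : ℝ) * p)
    (hu : u = Real.sqrt (((n : ℝ) * p + 1) ^ 2 - 4 * p))
    (hw₁ : w₁ = (1 - (n : ℝ) * p - u) / 2) (hw₂ : w₂ = (1 - (n : ℝ) * p + u) / 2)
    (ha : a = -(1 - 2 * p + (n : ℝ) * p - u) / (u * (1 - (n : ℝ) * p - u)))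
    (hb : b = (1 - 2 * p + (n : ℝ) * p + u) / (u * (1 - (n : ℝ) * p + u)))
    (h : ℕ → ℝ) (h1 : h 1 = 1) (h2 : h 2 = q + r)
    (hrec : ∀ m : ℕ, 3 ≤ m → h m = r * h (m - 1) + q * h (m - 2)) :
    ∀ m : ℕ, 1 ≤ m → h m = a * w₁ ^ m + b * w₂ ^ m := by
  have hq0 : 0 < q := by
    have hn' : (2 : ℝ) ≤ n := by exact_mod_cast hn
    rw [hq]; nlinarith [hp.1]
  have hdiscrim : ((n : ℝ) * p + 1) ^ 2 - 4 * p = r ^ 2 + 4 * q := by rw [hr, hq]; ring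
  have hu0 : 0 < u := by rw [hu, hdiscrim]; positivity
  have hu2 : u ^ 2 = r ^ 2 + 4 * q := by
    rw [hu, Real.sq_sqrt (by rw [hdiscrim]; positivity), hdiscrim]
  have hru : (r - u) * (r + u) ≠ 0 := by
    rw [show (r - u) * (r + u) = -(4 * q) by linear_combination -hu2]
    exact neg_ne_zero.mpr (by positivity)
  have hw₁' : w₁ = (r - u) / 2 := by rw [hw₁, hr]
  have hw₂' : w₂ = (r + u) / 2 := by rw [hw₂, hr]
  have root₁ : w₁ ^ 2 = r * w₁ + q := sq_eq_of_two_mul_sub_sq (by rw [hw₁']; linear_combination hu2)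
  have root₂ : w₂ ^ 2 = r * w₂ + q := sq_eq_of_two_mul_sub_sq (by rw [hw₂']; linear_combination hu2)
  obtain ⟨init₁, init₂⟩ := closed_form_coeffs_init (c := 1 - 2 * p + n * p) (a := a) (b := b)
    hu0.ne' hru hw₁' hw₂' (by rw [ha, hr]) (by rw [hb, hr])
  have shifted : (fun k => h (k + 1)) = fun k => a * w₁ ^ (k + 1) + b * w₂ ^ (k + 1) := by
    refine eq_of_two_step_rec (fun k => ?_) (fun k => add_pow_two_step_rec root₁ root₂ a b (k + 1))
      (by simpa [h1] using init₁.symm) ?_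
    · simpa using hrec (k + 3) (by omega)
    · rw [h2, init₂, hr, hq]; ring
  intro m hm
  obtain ⟨k, rfl⟩ := Nat.exists_eq_add_of_le' hm
  exact congrFun shifted k
end

section
/- Let n ≥ 2 be an integer and p ∈ (0, 1/n); set q = (n-1)·p, r = 1 - n·p, c = (1 - n·p)/(1 - p), u = √((n·p + 1)² - 4·p), w₁ = (1 - n·p - u)/2, and w₂ = (1 - n·p + u)/2. If h : ℕ → ℝ satisfies h(1) = 1, h(2) = q + r, and h(m) = r·h(m-1) + q·h(m-2) for all m ≥ 3, then for every m ≥ 2: c·h(m) + (1 - c)·h(m-1) = ((1 - 2·p + n·p + u)·w₂^m - (1 - 2·p + n·p - u)·w₁^m)/(2·(1 - p)·u). Equivalently, the interception probability Q = 1 - (c·h(m) + (1 - c)·h(m-1)) satisfies Q = 1 - ((1 - 2·p + n·p + u)·w₂^m - (1 - 2·p + n·p - u)·w₁^m)/(2·(1 - p)·u). -/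
/-- Explicit formula for the interception probability Q for delay d = 2 and
reflection probability s = 1. -/
theorem stmt_11 (n : ℕ) (hn : 2 ≤ n) (p : ℝ) (hp : p ∈ Set.Ioo (0 : ℝ) (1 / (n : ℝ)))
    (q r c u w₁ w₂ : ℝ)
    (hq : q = ((n : ℝ) - 1) * p) (hr : r = 1 - (n : ℝ) * p)
    (hc : c = (1 - (n : ℝ) * p) / (1 - p))
    (hu : u = Real.sqrt (((n : ℝ) * p + 1) ^ 2 - 4 * p))
    (hw₁ : w₁ = (1 - (n : ℝ) * p - u) / 2) (hw₂ : w₂ = (1 - (n : ℝ) * p + u) / 2)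
    (h : ℕ → ℝ) (h1 : h 1 = 1) (h2 : h 2 = q + r)
    (hrec : ∀ m : ℕ, 3 ≤ m → h m = r * h (m - 1) + q * h (m - 2)) :
    ∀ m : ℕ, 2 ≤ m →
      (c * h m + (1 - c) * h (m - 1)
          = ((1 - 2 * p + (n : ℝ) * p + u) * w₂ ^ m
              - (1 - 2 * p + (n : ℝ) * p - u) * w₁ ^ m) / (2 * (1 - p) * u)) ∧
        (1 - (c * h m + (1 - c) * h (m - 1))
          = 1 - ((1 - 2 * p + (n : ℝ) * p + u) * w₂ ^ m
              - (1 - 2 * p + (n : ℝ) * p - u) * w₁ ^ m) / (2 * (1 - p) * u)) := by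
  obtain ⟨hp0, hp1⟩ := hp
  have hN2 : (2:ℝ) ≤ (n:ℝ) := by exact_mod_cast hn
  have hNpos : (0:ℝ) < (n:ℝ) := by linarith
  have hpN : (n:ℝ) * p < 1 := by
    have := (lt_div_iff₀ hNpos).mp hp1; linarith
  have h1p : (0:ℝ) < 1 - p := by nlinarith
  have hKpos : (0:ℝ) < ((n:ℝ) * p + 1) ^ 2 - 4 * p := by nlinarith
  have hu2 : u ^ 2 = ((n:ℝ) * p + 1) ^ 2 - 4 * p := by
    rw [hu]; exact Real.sq_sqrt hKpos.le
  have hupos : (0:ℝ) < u := by rw [hu]; exact Real.sqrt_pos.mpr hKpos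
  have hroot2 : w₂ ^ 2 = r * w₂ + q := by
    rw [hw₂, hr, hq]; linear_combination hu2 / 4
  have hroot1 : w₁ ^ 2 = r * w₁ + q := by
    rw [hw₁, hr, hq]; linear_combination hu2 / 4
  have key : ∀ m : ℕ, 2 ≤ m →
      2 * u * (r * h m + q * h (m - 1))
        = (1 - 2 * p + (n : ℝ) * p + u) * w₂ ^ m
            - (1 - 2 * p + (n : ℝ) * p - u) * w₁ ^ m := by
    have base2 : 2 * u * (r * h 2 + q * h 1)
        = (1 - 2 * p + (n : ℝ) * p + u) * w₂ ^ 2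
            - (1 - 2 * p + (n : ℝ) * p - u) * w₁ ^ 2 := by
      rw [h1, h2, hq, hr, hw₁, hw₂]
      linear_combination (-(u / 2)) * hu2
    have base3 : 2 * u * (r * h 3 + q * h 2)
        = (1 - 2 * p + (n : ℝ) * p + u) * w₂ ^ 3
            - (1 - 2 * p + (n : ℝ) * p - u) * w₁ ^ 3 := by
      have e := hrec 3 (by norm_num)
      norm_num at e
      rw [e, h1, h2, hq, hr, hw₁, hw₂]
      linear_combination (-(u / 4) * ((1 - 2 * p + (n:ℝ) * p) + 3 * (1 - (n:ℝ) * p))) * hu2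
    have step : ∀ j : ℕ,
        2 * u * (r * h (j + 2) + q * h (j + 1))
          = (1 - 2 * p + (n : ℝ) * p + u) * w₂ ^ (j + 2)
              - (1 - 2 * p + (n : ℝ) * p - u) * w₁ ^ (j + 2) →
        2 * u * (r * h (j + 3) + q * h (j + 2))
          = (1 - 2 * p + (n : ℝ) * p + u) * w₂ ^ (j + 3)
              - (1 - 2 * p + (n : ℝ) * p - u) * w₁ ^ (j + 3) →
        2 * u * (r * h (j + 4) + q * h (j + 3))
          = (1 - 2 * p + (n : ℝ) * p + u) * w₂ ^ (j + 4)
              - (1 - 2 * p + (n : ℝ) * p - u) * w₁ ^ (j + 4) := by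
      intro j Pm Pm1
      have e1 := hrec (j + 4) (by omega)
      have e2 := hrec (j + 3) (by omega)
      have s1 : j + 4 - 1 = j + 3 := by omega
      have s2 : j + 4 - 2 = j + 2 := by omega
      have s3 : j + 3 - 1 = j + 2 := by omega
      have s4 : j + 3 - 2 = j + 1 := by omega
      rw [s1, s2] at e1
      rw [s3, s4] at e2
      linear_combination (2 * u * r) * e1 + (2 * u * q) * e2 + r * Pm1 + q * Pm
        - ((1 - 2 * p + (n:ℝ) * p + u) * w₂ ^ (j + 2)) * hroot2
        + ((1 - 2 * p + (n:ℝ) * p - u) * w₁ ^ (j + 2)) * hroot1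
    have all : ∀ k : ℕ,
        (2 * u * (r * h (k + 2) + q * h (k + 1))
          = (1 - 2 * p + (n : ℝ) * p + u) * w₂ ^ (k + 2)
              - (1 - 2 * p + (n : ℝ) * p - u) * w₁ ^ (k + 2)) ∧
        (2 * u * (r * h (k + 3) + q * h (k + 2))
          = (1 - 2 * p + (n : ℝ) * p + u) * w₂ ^ (k + 3)
              - (1 - 2 * p + (n : ℝ) * p - u) * w₁ ^ (k + 3)) := by
      intro k
      induction k with
      | zero => exact ⟨by simpa using base2, by simpa using base3⟩
      | succ k ih => exact ⟨ih.2, step k ih.1 ih.2⟩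
    intro m hm
    obtain ⟨k, rfl⟩ : ∃ k, m = k + 2 := ⟨m - 2, by omega⟩
    have := (all k).1
    have s : k + 2 - 1 = k + 1 := by omega
    rw [s]
    exact this
  intro m hm
  have k := key m hm
  have goal1 : c * h m + (1 - c) * h (m - 1)
      = ((1 - 2 * p + (n : ℝ) * p + u) * w₂ ^ m
          - (1 - 2 * p + (n : ℝ) * p - u) * w₁ ^ m) / (2 * (1 - p) * u) := by
    rw [← k, hc, hr, hq]
    field_simp
    ring
  exact ⟨goal1, by rw [goal1]⟩
end

section
/- Let n ≥ 2 be an integer and p ∈ (0, 1/n); set u = √((n·p + 1)² - 4·p), w₁ = (1 - n·p - u)/2 and w₂ = (1 - n·p + u)/2. Then for every real z with |z|·w₂ < 1, the series ∑_{k=1}^∞ (p·(w₂^k - w₁^k)/u)·z^k converges and equals p·z/(1 - (1 - n·p)·z - (n-1)·p·z²). -/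
/-!
`w₁` and `w₂` are the roots of `w² - (1 - n p) w - (n - 1) p`, so the denominator factors as
`(1 - w₁ z) (1 - w₂ z)` and `u = w₂ - w₁ > 0`. The series is thus `p / u` times the difference of
the geometric series in `w₂ z` and `w₁ z`, both convergent because `w₁ + w₂ = 1 - n p > 0` gives
`|w₁| ≤ w₂`.
-/

section GeometricDifference

variable {𝕜 : Type*} [NormedField 𝕜]

theorem hasSum_pow_succ_of_norm_lt_one {r : 𝕜} (h : ‖r‖ < 1) :
    HasSum (fun k : ℕ => r ^ (k + 1)) (r / (1 - r)) := by
  simpa only [pow_succ', div_eq_mul_inv] using (hasSum_geometric_of_norm_lt_one h).mul_left r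

theorem hasSum_pow_succ_sub_pow_succ_div_sub_mul_pow {a b z : 𝕜} (hab : a ≠ b)
    (ha : ‖a * z‖ < 1) (hb : ‖b * z‖ < 1) :
    HasSum (fun k : ℕ => (b ^ (k + 1) - a ^ (k + 1)) / (b - a) * z ^ (k + 1))
      (z / ((1 - a * z) * (1 - b * z))) := by
  have ha' : 1 - a * z ≠ 0 := (isUnit_one_sub_of_norm_lt_one ha).ne_zero
  have hb' : 1 - b * z ≠ 0 := (isUnit_one_sub_of_norm_lt_one hb).ne_zero
  convert ((hasSum_pow_succ_of_norm_lt_one hb).sub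
    (hasSum_pow_succ_of_norm_lt_one ha)).div_const (b - a) using 1
  · ext k
    rw [mul_pow, mul_pow]
    field_simp
  · rw [div_sub_div _ _ hb' ha']
    field_simp
    ring

end GeometricDifference

section Parameters

variable {n : ℕ} {p : ℝ}

theorem natCast_pos_of_mem_Ioo (hp : p ∈ Set.Ioo (0 : ℝ) (1 / (n : ℝ))) : (0 : ℝ) < n :=
  one_div_pos.mp (hp.1.trans hp.2)

theorem natCast_mul_lt_one_of_mem_Ioo (hp : p ∈ Set.Ioo (0 : ℝ) (1 / (n : ℝ))) :
    (n : ℝ) * p < 1 := by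
  have := hp.2
  rwa [lt_div_iff₀ (natCast_pos_of_mem_Ioo hp), mul_comm] at this

theorem discrim_pos_of_mem_Ioo (hp : p ∈ Set.Ioo (0 : ℝ) (1 / (n : ℝ))) :
    0 < ((n : ℝ) * p + 1) ^ 2 - 4 * p := by
  have hp0 := hp.1
  have hnp := natCast_mul_lt_one_of_mem_Ioo hp
  have hn1 : (1 : ℝ) ≤ n := Nat.one_le_cast.mpr (Nat.cast_pos.mp (natCast_pos_of_mem_Ioo hp))
  nlinarith

end Parameters

theorem stmt_14_general (n : ℕ) (p : ℝ) (hp : p ∈ Set.Ioo (0 : ℝ) (1 / (n : ℝ)))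
    (u w₁ w₂ : ℝ)
    (hu : u = Real.sqrt (((n : ℝ) * p + 1) ^ 2 - 4 * p))
    (hw₁ : w₁ = (1 - (n : ℝ) * p - u) / 2) (hw₂ : w₂ = (1 - (n : ℝ) * p + u) / 2) :
    ∀ z : ℝ, |z| * w₂ < 1 →
      HasSum (fun k : ℕ => (p * (w₂ ^ (k + 1) - w₁ ^ (k + 1)) / u) * z ^ (k + 1))
        (p * z / (1 - (1 - (n : ℝ) * p) * z - ((n : ℝ) - 1) * p * z ^ 2)) := by
  intro z hz
  have hdisc := discrim_pos_of_mem_Ioo hp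
  have hu0 : 0 < u := hu ▸ Real.sqrt_pos.mpr hdisc
  have hu2 : u ^ 2 = ((n : ℝ) * p + 1) ^ 2 - 4 * p := hu ▸ Real.sq_sqrt hdisc.le
  have hnp := natCast_mul_lt_one_of_mem_Ioo hp
  have hw : |w₁| ≤ w₂ := abs_le.mpr ⟨by linarith, by linarith⟩
  have hz₂ : |w₂ * z| < 1 := by
    rwa [abs_mul, abs_of_nonneg ((abs_nonneg w₁).trans hw), mul_comm]
  have hz₁ : |w₁ * z| < 1 := by
    rw [abs_mul]; nlinarith [abs_nonneg z]
  have hden : 1 - (1 - (n : ℝ) * p) * z - ((n : ℝ) - 1) * p * z ^ 2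
      = (1 - w₁ * z) * (1 - w₂ * z) := by
    subst hw₁ hw₂; linear_combination (z ^ 2 / 4) * hu2
  have hgen := (hasSum_pow_succ_sub_pow_succ_div_sub_mul_pow (by linarith) hz₁ hz₂).mul_left p
  rw [show w₂ - w₁ = u by linarith] at hgen
  rw [hden]
  simpa only [mul_div_assoc, mul_assoc] using hgen

/-- The probability generating function of the hitting time T_C:
∑_{k≥1} Pr(T_C = k)·z^k = p·z/(1 - (1 - n·p)·z - (n-1)·p·z²). -/
theorem stmt_14 (n : ℕ) (hn : 2 ≤ n) (p : ℝ) (hp : p ∈ Set.Ioo (0 : ℝ) (1 / (n : ℝ)))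
    (u w₁ w₂ : ℝ)
    (hu : u = Real.sqrt (((n : ℝ) * p + 1) ^ 2 - 4 * p))
    (hw₁ : w₁ = (1 - (n : ℝ) * p - u) / 2) (hw₂ : w₂ = (1 - (n : ℝ) * p + u) / 2) :
    ∀ z : ℝ, |z| * w₂ < 1 →
      HasSum (fun k : ℕ => (p * (w₂ ^ (k + 1) - w₁ ^ (k + 1)) / u) * z ^ (k + 1))
        (p * z / (1 - (1 - (n : ℝ) * p) * z - ((n : ℝ) - 1) * p * z ^ 2)) :=
  stmt_14_general n p hp u w₁ w₂ hu hw₁ hw₂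
end

section
/- Let n ≥ 2 be an integer and p ∈ (0, 1/n]; set q = (n-1)·p and r = 1 - n·p. Let h : ℕ → ℝ satisfy h(1) = 1, h(2) = q + r, and h(m) = r·h(m-1) + q·h(m-2) for all m ≥ 3. Then 0 ≤ h(m) ≤ 1 for all m ≥ 1, and h is nonincreasing: h(m+1) ≤ h(m) for all m ≥ 1. -/
/-! With `q, r ≥ 0` the recurrence `f (m + 2) = r f (m + 1) + q f m` preserves nonnegativity,
and the successive differences `h m - h (m + 1)` obey the same recurrence. Their first two values
are `p` and `p r`, so all differences are nonnegative and `h` is antitone; since `h 1 = 1`, it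
follows that `h ≤ 1`. -/

theorem nonneg_of_linear_recurrence {q r : ℝ} (hq : 0 ≤ q) (hr : 0 ≤ r) {f : ℕ → ℝ}
    (h0 : 0 ≤ f 0) (h1 : 0 ≤ f 1) (hrec : ∀ m, f (m + 2) = r * f (m + 1) + q * f m) :
    ∀ m, 0 ≤ f m
  | 0 => h0
  | 1 => h1
  | m + 2 => by
    rw [hrec]
    have := nonneg_of_linear_recurrence hq hr h0 h1 hrec (m + 1)
    have := nonneg_of_linear_recurrence hq hr h0 h1 hrec m
    positivity

theorem antitone_of_linear_recurrence {q r : ℝ} (hq : 0 ≤ q) (hr : 0 ≤ r) {f : ℕ → ℝ}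
    (h10 : f 1 ≤ f 0) (h21 : f 2 ≤ f 1) (hrec : ∀ m, f (m + 2) = r * f (m + 1) + q * f m) :
    Antitone f := by
  have hdiff : ∀ m, f (m + 2) - f (m + 3) = r * (f (m + 1) - f (m + 2)) + q * (f m - f (m + 1)) :=
    fun m => by rw [hrec (m + 1), hrec m]; ring
  have := nonneg_of_linear_recurrence hq hr (f := fun m => f m - f (m + 1))
    (sub_nonneg.mpr h10) (sub_nonneg.mpr h21) hdiff
  exact antitone_nat_of_succ_le fun m => sub_nonneg.mp (this m)

theorem stmt_15_general (n : ℕ) (p : ℝ) (hp : p ∈ Set.Ioc (0 : ℝ) (1 / (n : ℝ)))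
    (q r : ℝ) (hq : q = ((n : ℝ) - 1) * p) (hr : r = 1 - (n : ℝ) * p)
    (h : ℕ → ℝ) (h1 : h 1 = 1) (h2 : h 2 = q + r)
    (hrec : ∀ m : ℕ, 3 ≤ m → h m = r * h (m - 1) + q * h (m - 2)) :
    (∀ m : ℕ, 1 ≤ m → 0 ≤ h m ∧ h m ≤ 1) ∧
      ∀ m : ℕ, 1 ≤ m → h (m + 1) ≤ h m := by
  obtain ⟨hp0, hpn⟩ := hp
  have hn0 : (0 : ℝ) < n := one_div_pos.mp (hp0.trans_le hpn)
  have hn1 : (1 : ℝ) ≤ n := Nat.one_le_cast.mpr (Nat.cast_pos.mp hn0)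
  have hnp : (n : ℝ) * p ≤ 1 := by rwa [le_div_iff₀ hn0, mul_comm] at hpn
  have hq0 : 0 ≤ q := hq ▸ mul_nonneg (by linarith) hp0.le
  have hr0 : 0 ≤ r := by rw [hr]; linarith
  have hrec' : ∀ m, h (m + 3) = r * h (m + 2) + q * h (m + 1) := fun m => hrec (m + 3) (by omega)
  have h3 : h 3 = r * (q + r) + q := by simpa [h1, h2] using hrec' 0
  have hanti : Antitone fun m => h (m + 1) :=
    antitone_of_linear_recurrence hq0 hr0 (by simp only [h1, h2]; rw [hq, hr]; linarith)
      (by simp only [h2, h3]; rw [hq, hr]; nlinarith) hrec'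
  have hnonneg := nonneg_of_linear_recurrence hq0 hr0 (f := fun m => h (m + 1))
    (by simp [h1]) (by simp only [h2]; rw [hq, hr]; linarith) hrec'
  refine ⟨fun m hm => ?_, fun m hm => ?_⟩ <;> obtain ⟨k, rfl⟩ := Nat.exists_eq_add_of_le' hm
  · exact ⟨hnonneg k, h1 ▸ hanti (Nat.zero_le k)⟩
  · exact hanti (Nat.le_succ k)

/-- The success probability h(m) is a probability and is nonincreasing in the
attack duration m. -/
theorem stmt_15 (n : ℕ) (hn : 2 ≤ n) (p : ℝ) (hp : p ∈ Set.Ioc (0 : ℝ) (1 / (n : ℝ)))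
    (q r : ℝ) (hq : q = ((n : ℝ) - 1) * p) (hr : r = 1 - (n : ℝ) * p)
    (h : ℕ → ℝ) (h1 : h 1 = 1) (h2 : h 2 = q + r)
    (hrec : ∀ m : ℕ, 3 ≤ m → h m = r * h (m - 1) + q * h (m - 2)) :
    (∀ m : ℕ, 1 ≤ m → 0 ≤ h m ∧ h m ≤ 1) ∧
      ∀ m : ℕ, 1 ≤ m → h (m + 1) ≤ h m :=
  stmt_15_general n p hp q r hq hr h h1 h2 hrec
end

section
/- The sequence n ↦ n·((2·n - 1) - 2·√(n·(n-1))), for positive integers n, converges to 1/4 as n → ∞. Equivalently, with V(n) = (2·n - 1) - 2·√(n·(n-1)) the value of the Uniformed Patroller game with attack duration m = 2, and Ṽ(n) = 1/n the value of the corresponding non-uniformed game, the ratio V(n)/Ṽ(n) converges to 1/4. -/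
/-!
With `s = √(1 - 1/a)` one has `√(a(a-1)) = a s` and `a(1 - s²) = 1`, so
`a·((2a - 1) - 2√(a(a-1))) = (a(1 - s))² = (1 + s)⁻²`, which tends to `1/4` as `s → 1`.
-/

open Filter Topology

/-- The value `V(n)` of the uniformed patroller game on a star with `n` end nodes for attack
duration `2`. -/
noncomputable def patrolValue (n : ℝ) : ℝ :=
  (2 * n - 1) - 2 * Real.sqrt (n * (n - 1))

lemma mul_patrolValue_eq {a : ℝ} (ha : 1 ≤ a) :
    a * patrolValue a = ((1 + Real.sqrt (1 - a⁻¹)) ^ 2)⁻¹ := by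
  have ha0 : 0 < a := zero_lt_one.trans_le ha
  set s := Real.sqrt (1 - a⁻¹) with hs
  have hs2 : a * (1 - s ^ 2) = 1 := by
    rw [hs, Real.sq_sqrt (sub_nonneg.2 (inv_le_one_of_one_le₀ ha))]
    field_simp
    ring
  have hsqrt : Real.sqrt (a * (a - 1)) = a * s := by
    rw [show a * (a - 1) = a ^ 2 * (1 - a⁻¹) by field_simp, Real.sqrt_mul (sq_nonneg a),
      Real.sqrt_sq ha0.le]
  rw [patrolValue, hsqrt]
  refine eq_inv_of_mul_eq_one_left ?_
  linear_combination (a * (1 + s) ^ 2 + a * (1 - s ^ 2) + 1) * hs2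

lemma tendsto_mul_patrolValue_atTop :
    Tendsto (fun a : ℝ => a * patrolValue a) atTop (𝓝 (1 / 4)) := by
  have hlim : Tendsto (fun a : ℝ => ((1 + Real.sqrt (1 - a⁻¹)) ^ 2)⁻¹) atTop
      (𝓝 ((1 + Real.sqrt (1 - 0)) ^ 2)⁻¹) :=
    ((tendsto_const_nhds.add
      ((tendsto_const_nhds.sub tendsto_inv_atTop_zero).sqrt)).pow 2).inv₀ (by positivity)
  rw [show (1 / 4 : ℝ) = ((1 + Real.sqrt (1 - 0)) ^ 2)⁻¹ by norm_num]
  exact hlim.congr' <| (eventually_ge_atTop 1).mono fun a ha => (mul_patrolValue_eq ha).symm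

/-- The ratio of the uniformed to non-uniformed game values for m = 2 tends to 1/4:
n·((2n - 1) - 2√(n(n-1))) → 1/4. -/
theorem stmt_17 :
    Tendsto (fun n : ℕ => (n : ℝ) *
        ((2 * (n : ℝ) - 1) - 2 * Real.sqrt ((n : ℝ) * ((n : ℝ) - 1))))
      atTop (𝓝 (1 / 4)) :=
  tendsto_mul_patrolValue_atTop.comp tendsto_natCast_atTop_atTop
end

section
/- Fix an integer j ≥ 1 and set m = 2·j + 1. For each integer n ≥ 2, let V(n) = 1 - ((n-1)/n)^j and Ṽ(n) = (1/2)·(1 - ((n-1)/n)^j) + (1/2)·(1 - ((n-1)/n)^{j+1}). Then (Ṽ(n) - V(n))/Ṽ(n) converges to 1/m = 1/(2·j + 1) as n → ∞. -/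
open Filter Topology

private noncomputable def gfun (j : ℕ) : ℝ → ℝ :=
  fun x => x ^ j / (∑ i ∈ Finset.range j, x ^ i + ∑ i ∈ Finset.range (j + 1), x ^ i)

/-- For odd attack duration m = 2j + 1, the relative loss in interception
probability from wearing a uniform tends to 1/m. -/
theorem stmt_18 (j : ℕ) (hj : 1 ≤ j)
    (V Vt : ℕ → ℝ)
    (hV : ∀ n : ℕ, V n = 1 - (((n : ℝ) - 1) / (n : ℝ)) ^ j)
    (hVt : ∀ n : ℕ, Vt n = (1 / 2) * (1 - (((n : ℝ) - 1) / (n : ℝ)) ^ j)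
      + (1 / 2) * (1 - (((n : ℝ) - 1) / (n : ℝ)) ^ (j + 1))) :
    Tendsto (fun n : ℕ => (Vt n - V n) / Vt n) atTop (𝓝 (1 / (2 * (j : ℝ) + 1))) := by
  -- x_n → 1
  have hx : Tendsto (fun n : ℕ => ((n : ℝ) - 1) / (n : ℝ)) atTop (𝓝 1) := by
    have h1 : Tendsto (fun n : ℕ => 1 - 1 / (n : ℝ)) atTop (𝓝 (1 - 0)) :=
      tendsto_const_nhds.sub tendsto_one_div_atTop_nhds_zero_nat
    rw [sub_zero] at h1
    refine h1.congr' ?_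
    filter_upwards [eventually_ge_atTop 1] with n hn
    have hn0 : (n : ℝ) ≠ 0 := by positivity
    field_simp
  -- g is continuous at 1 with value 1/(2j+1)
  have hden : (∑ i ∈ Finset.range j, (1:ℝ) ^ i + ∑ i ∈ Finset.range (j + 1), (1:ℝ) ^ i) ≠ 0 := by
    simp only [one_pow, Finset.sum_const, Finset.card_range, smul_eq_mul, mul_one]
    positivity
  have hg : ContinuousAt (gfun j) 1 := by
    apply ContinuousAt.div
    · fun_prop
    · fun_prop
    · exact hden
  have hg1 : gfun j 1 = 1 / (2 * (j : ℝ) + 1) := by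
    simp only [gfun, one_pow, Finset.sum_const, Finset.card_range, smul_eq_mul, mul_one]
    ring_nf
  have hcomp : Tendsto (fun n : ℕ => gfun j (((n : ℝ) - 1) / (n : ℝ))) atTop
      (𝓝 (1 / (2 * (j : ℝ) + 1))) := by
    rw [← hg1]
    exact hg.tendsto.comp hx
  -- eventually the two sequences agree
  refine hcomp.congr' ?_
  filter_upwards [eventually_ge_atTop 2] with n hn
  set x : ℝ := ((n : ℝ) - 1) / (n : ℝ) with hxdef
  have hn0 : (n : ℝ) ≠ 0 := by positivity
  have hn2 : (2 : ℝ) ≤ (n : ℝ) := by exact_mod_cast hn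
  have hxlt : x < 1 := by
    rw [hxdef, div_lt_one (by linarith)]; linarith
  have h1x : (1 : ℝ) - x ≠ 0 := by linarith
  -- geometric sum identities
  have hs1 : (1 - x) * ∑ i ∈ Finset.range j, x ^ i = 1 - x ^ j := by
    have := geom_sum_mul x j
    linarith [this]
  have hs2 : (1 - x) * ∑ i ∈ Finset.range (j + 1), x ^ i = 1 - x ^ (j + 1) := by
    have := geom_sum_mul x (j + 1)
    linarith [this]
  have hnum : Vt n - V n = (1 / 2) * (x ^ j * (1 - x)) := by
    rw [hV, hVt, pow_succ]; ring
  have hden2 : Vt n = (1 / 2) * ((1 - x) * (∑ i ∈ Finset.range j, x ^ i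
      + ∑ i ∈ Finset.range (j + 1), x ^ i)) := by
    rw [hVt, mul_add (1 - x), hs1, hs2]; ring
  rw [hnum, hden2, gfun, mul_div_mul_left _ _ (by norm_num : (1/2:ℝ) ≠ 0),
    show x ^ j * (1 - x) = (1 - x) * x ^ j from mul_comm _ _,
    mul_div_mul_left _ _ h1x]
end
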